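/- arXiv:2504.04620 — 2 statements merged into one kernel-verified Lean document; each statement's English description precedes it below -/
import Mathlib

section
/- Let V₁, V₂, … be pairwise uncorrelated zero-mean random variables with common variance σ², 0 < σ < ∞, and let Tₙ = (1/(σ√n)) Σ_{k=1}^n V_k. If n₁ < n₂ < ⋯ is a sequence of natural numbers with n_{m+1}/n_m → 1 and the subsequence T_{n_m} converges in law to a random variable T, then the whole sequence Tₙ converges in law to T. -/
open MeasureTheory ProbabilityTheory Filter

lemma aux_integrable_mul {Ω : Type*} [MeasureSpace Ω] [IsFiniteMeasure (ℙ : Measure Ω)]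
    {f g : Ω → ℝ} (hf : MemLp f 2 ℙ) (hg : MemLp g 2 ℙ) :
    Integrable (fun ω => f ω * g ω) ℙ := by
  have h : Integrable (fun ω => (1/2 : ℝ) * (f ω ^ 2 + g ω ^ 2)) ℙ :=
    (hf.integrable_sq.add hg.integrable_sq).const_mul _
  refine h.mono' (hf.1.mul hg.1) ?_
  filter_upwards with ω
  rw [Real.norm_eq_abs, abs_mul]
  nlinarith [sq_abs (f ω), sq_abs (g ω), sq_nonneg (|f ω| - |g ω|), abs_nonneg (f ω), abs_nonneg (g ω)]

section Cov
variable {Ω : Type*} [MeasureSpace Ω] [IsProbabilityMeasure (ℙ : Measure Ω)]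
    (V : ℕ → Ω → ℝ) (σ : ℝ)

lemma aux_cov (hVL2 : ∀ k, MemLp (V k) 2 ℙ)
    (hVvar : ∀ k, ∫ ω, (V k ω) ^ 2 ∂ℙ = σ ^ 2)
    (hVuncorr : ∀ j k, j ≠ k → ∫ ω, V j ω * V k ω ∂ℙ = 0) (a b : ℕ) :
    ∫ ω, (∑ i ∈ Finset.Icc 1 a, V i ω) * (∑ j ∈ Finset.Icc 1 b, V j ω) ∂ℙ
      = (min a b : ℕ) * σ ^ 2 := by
  have hint : ∀ i j : ℕ, Integrable (fun ω => V i ω * V j ω) ℙ :=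
    fun i j => aux_integrable_mul (hVL2 i) (hVL2 j)
  have e1 : (fun ω => (∑ i ∈ Finset.Icc 1 a, V i ω) * (∑ j ∈ Finset.Icc 1 b, V j ω))
      = fun ω => ∑ i ∈ Finset.Icc 1 a, ∑ j ∈ Finset.Icc 1 b, V i ω * V j ω := by
    funext ω; exact Finset.sum_mul_sum _ _ _ _
  rw [e1, integral_finset_sum _ (fun i _ => integrable_finset_sum _ (fun j _ => hint i j))]
  have e2 : ∀ i ∈ Finset.Icc 1 a,
      (∫ ω, ∑ j ∈ Finset.Icc 1 b, V i ω * V j ω ∂ℙ)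
        = if i ∈ Finset.Icc 1 b then σ ^ 2 else 0 := by
    intro i _
    rw [integral_finset_sum _ (fun j _ => hint i j)]
    have e3 : ∀ j ∈ Finset.Icc 1 b,
        (∫ ω, V i ω * V j ω ∂ℙ) = if j = i then σ ^ 2 else 0 := by
      intro j _
      by_cases h : j = i
      · subst h
        rw [if_pos rfl, show (fun ω => V j ω * V j ω) = fun ω => V j ω ^ 2 by funext ω; ring]
        exact hVvar j
      · rw [if_neg h]; exact hVuncorr i j (fun hh => h hh.symm)
    rw [Finset.sum_congr rfl e3, Finset.sum_ite_eq' (Finset.Icc 1 b) i (fun _ => σ ^ 2)]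
  rw [Finset.sum_congr rfl e2, Finset.sum_ite_mem]
  have e4 : Finset.Icc 1 a ∩ Finset.Icc 1 b = Finset.Icc 1 (min a b) := by
    ext x; simp only [Finset.mem_inter, Finset.mem_Icc, le_min_iff]; omega
  rw [e4, Finset.sum_const, Nat.card_Icc]
  simp [nsmul_eq_mul]

lemma aux_quad (hVL2 : ∀ k, MemLp (V k) 2 ℙ)
    (hVvar : ∀ k, ∫ ω, (V k ω) ^ 2 ∂ℙ = σ ^ 2)
    (hVuncorr : ∀ j k, j ≠ k → ∫ ω, V j ω * V k ω ∂ℙ = 0) (a b : ℕ) (c d : ℝ) :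
    ∫ ω, (c * (∑ i ∈ Finset.Icc 1 a, V i ω) - d * (∑ j ∈ Finset.Icc 1 b, V j ω)) ^ 2 ∂ℙ
      = c ^ 2 * ((a : ℝ) * σ ^ 2) - 2 * (c * d) * ((min a b : ℕ) * σ ^ 2)
        + d ^ 2 * ((b : ℝ) * σ ^ 2) := by
  set S : ℕ → Ω → ℝ := fun m ω => ∑ i ∈ Finset.Icc 1 m, V i ω with hS
  have hS2 : ∀ m, MemLp (S m) 2 ℙ := fun m => memLp_finset_sum _ (fun i _ => hVL2 i)
  have hint : ∀ i j : ℕ, Integrable (fun ω => S i ω * S j ω) ℙ :=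
    fun i j => aux_integrable_mul (hS2 i) (hS2 j)
  have e1 : (fun ω => (c * S a ω - d * S b ω) ^ 2)
      = fun ω => (c ^ 2 * (S a ω * S a ω) - 2 * (c * d) * (S a ω * S b ω))
          + d ^ 2 * (S b ω * S b ω) := by
    funext ω; ring
  have i1 : Integrable (fun ω => c ^ 2 * (S a ω * S a ω)) ℙ := (hint a a).const_mul _
  have i2 : Integrable (fun ω => 2 * (c * d) * (S a ω * S b ω)) ℙ := (hint a b).const_mul _
  have i3 : Integrable (fun ω => d ^ 2 * (S b ω * S b ω)) ℙ := (hint b b).const_mul _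
  have i12 : Integrable (fun ω => c ^ 2 * (S a ω * S a ω) - 2 * (c * d) * (S a ω * S b ω)) ℙ :=
    i1.sub i2
  rw [e1, integral_add i12 i3, integral_sub i1 i2,
    integral_const_mul, integral_const_mul, integral_const_mul]
  have c1 : ∫ ω, S a ω * S a ω ∂ℙ = (min a a : ℕ) * σ ^ 2 := aux_cov V σ hVL2 hVvar hVuncorr a a
  have c2 : ∫ ω, S a ω * S b ω ∂ℙ = (min a b : ℕ) * σ ^ 2 := aux_cov V σ hVL2 hVvar hVuncorr a b
  have c3 : ∫ ω, S b ω * S b ω ∂ℙ = (min b b : ℕ) * σ ^ 2 := aux_cov V σ hVL2 hVvar hVuncorr b b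
  rw [c1, c2, c3]
  simp

lemma aux_Tdiff (hσ : 0 < σ) (hVL2 : ∀ k, MemLp (V k) 2 ℙ)
    (hVvar : ∀ k, ∫ ω, (V k ω) ^ 2 ∂ℙ = σ ^ 2)
    (hVuncorr : ∀ j k, j ≠ k → ∫ ω, V j ω * V k ω ∂ℙ = 0)
    (N k : ℕ) (hN : 1 ≤ N) (hNk : N ≤ k) :
    ∫ ω, ((1/(σ * Real.sqrt k)) * (∑ i ∈ Finset.Icc 1 k, V i ω)
        - (1/(σ * Real.sqrt N)) * (∑ i ∈ Finset.Icc 1 N, V i ω)) ^ 2 ∂ℙ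
      ≤ 2 * (1 - (N : ℝ)/(k : ℝ)) := by
  rw [aux_quad V σ hVL2 hVvar hVuncorr k N _ _, min_eq_right hNk]
  have hkpos : (0:ℝ) < k := by exact_mod_cast Nat.lt_of_lt_of_le Nat.zero_lt_one (hN.trans hNk)
  have hNpos : (0:ℝ) < N := by exact_mod_cast Nat.lt_of_lt_of_le Nat.zero_lt_one hN
  have hsk : Real.sqrt k ^ 2 = (k:ℝ) := Real.sq_sqrt hkpos.le
  have hsN : Real.sqrt N ^ 2 = (N:ℝ) := Real.sq_sqrt hNpos.le
  have hskpos : 0 < Real.sqrt k := Real.sqrt_pos.mpr hkpos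
  have hsNpos : 0 < Real.sqrt N := Real.sqrt_pos.mpr hNpos
  have h1 : (1/(σ * Real.sqrt k)) ^ 2 * ((k:ℝ) * σ ^ 2) = 1 := by
    rw [div_pow, one_pow, mul_pow, hsk]; field_simp
  have h2 : (1/(σ * Real.sqrt N)) ^ 2 * ((N:ℝ) * σ ^ 2) = 1 := by
    rw [div_pow, one_pow, mul_pow, hsN]; field_simp
  have h3 : 2 * ((1/(σ * Real.sqrt k)) * (1/(σ * Real.sqrt N))) * ((N:ℝ) * σ ^ 2)
      = 2 * (Real.sqrt N / Real.sqrt k) := by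
    field_simp; linear_combination (-1 : ℝ) * hsN
  have h4 : (N:ℝ)/(k:ℝ) ≤ Real.sqrt N / Real.sqrt k := by
    have he : Real.sqrt N / Real.sqrt k = Real.sqrt ((N:ℝ)/k) := (Real.sqrt_div hNpos.le _).symm
    rw [he]
    have hle1 : (N:ℝ)/k ≤ 1 := by
      rw [div_le_one hkpos]; exact_mod_cast hNk
    have h0 : 0 ≤ (N:ℝ)/k := by positivity
    nlinarith [Real.sq_sqrt h0, Real.sqrt_nonneg ((N:ℝ)/k)]
  rw [h1, h2, h3]
  linarith

end Cov


/-- Let `V 1, V 2, …` be pairwise uncorrelated zero-mean random variables with common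
variance `σ²`, `0 < σ < ∞`, and `T n = (1/(σ√n)) ∑_{k=1}^n V k`. If `n 1 < n 2 < ⋯` is a
sequence of natural numbers with `n (m+1) / n m → 1` and the subsequence `T (n m)`
converges in law to a random variable `T`, then the whole sequence `T n` converges in law
to `T`. (Convergence in law is expressed via bounded continuous test functions.) -/
theorem fill_gaps_convergence_in_law
    {Ω : Type*} [MeasureSpace Ω] [IsProbabilityMeasure (ℙ : Measure Ω)]
    (V : ℕ → Ω → ℝ) (hVmeas : ∀ k, Measurable (V k))
    (hVL2 : ∀ k, MemLp (V k) 2 ℙ)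
    (hVmean : ∀ k, ∫ ω, V k ω ∂ℙ = 0)
    (σ : ℝ) (hσ : 0 < σ)
    (hVvar : ∀ k, ∫ ω, (V k ω) ^ 2 ∂ℙ = σ ^ 2)
    (hVuncorr : ∀ j k, j ≠ k → ∫ ω, V j ω * V k ω ∂ℙ = 0)
    (T : ℕ → Ω → ℝ)
    (hT : ∀ n, T n = fun ω => (1 / (σ * Real.sqrt n)) * ∑ k ∈ Finset.Icc 1 n, V k ω)
    (n : ℕ → ℕ) (hnmono : StrictMono n) (hnpos : ∀ m, 0 < n m)
    (hnratio : Tendsto (fun m => (n (m + 1) : ℝ) / (n m : ℝ)) atTop (nhds 1))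
    (Tlim : Ω → ℝ) (hTlimmeas : Measurable Tlim)
    (hsub : ∀ f : BoundedContinuousFunction ℝ ℝ,
      Tendsto (fun m => ∫ ω, f (T (n m) ω) ∂ℙ) atTop (nhds (∫ ω, f (Tlim ω) ∂ℙ))) :
    ∀ f : BoundedContinuousFunction ℝ ℝ,
      Tendsto (fun k => ∫ ω, f (T k ω) ∂ℙ) atTop (nhds (∫ ω, f (Tlim ω) ∂ℙ)) := by
  classical
  -- measurability and L² membership of T
  have hSmeas : ∀ a : ℕ, Measurable (fun ω => ∑ i ∈ Finset.Icc 1 a, V i ω) :=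
    fun a => Finset.measurable_sum _ (fun i _ => hVmeas i)
  have hTmeas : ∀ k, Measurable (T k) := by
    intro k; rw [hT]; exact (hSmeas k).const_mul _
  have hTL2 : ∀ k, MemLp (T k) 2 ℙ := by
    intro k; rw [hT]
    exact (memLp_finset_sum _ (fun i _ => hVL2 i)).const_mul _
  -- the index function: idx k = largest j with n j ≤ k
  set idx : ℕ → ℕ := fun k => Nat.findGreatest (fun j => n j ≤ k) k with hidx
  have hidx_le : ∀ k, n 0 ≤ k → n (idx k) ≤ k := by
    intro k hk
    exact Nat.findGreatest_spec (P := fun j => n j ≤ k) (Nat.zero_le k) hk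
  have hidx_lt : ∀ k, n 0 ≤ k → k < n (idx k + 1) := by
    intro k hk
    by_contra h
    push_neg at h
    exact Nat.findGreatest_is_greatest (P := fun j => n j ≤ k) (Nat.lt_succ_self _) (le_trans hnmono.le_apply h) h
  have hidx_ge : ∀ M k : ℕ, n M ≤ k → M ≤ idx k :=
    fun M k h => Nat.le_findGreatest (P := fun j => n j ≤ k) (le_trans hnmono.le_apply h) h
  have hidx_tendsto : Tendsto idx atTop atTop := by
    rw [tendsto_atTop]
    intro M
    filter_upwards [eventually_ge_atTop (n M)] with k hk
    exact hidx_ge M k hk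
  -- the L² error sequence
  set e : ℕ → ℝ := fun k => ∫ ω, (T k ω - T (n (idx k)) ω) ^ 2 ∂ℙ with he
  have he0 : ∀ k, 0 ≤ e k := fun k => integral_nonneg (fun ω => sq_nonneg _)
  have hebound : ∀ᶠ k in atTop, e k ≤ 2 * (1 - (n (idx k) : ℝ) / (n (idx k + 1) : ℝ)) := by
    filter_upwards [eventually_ge_atTop (n 0)] with k hk
    have h1 : 1 ≤ n (idx k) := hnpos _
    have h2 : n (idx k) ≤ k := hidx_le k hk
    have hkpos : (0:ℝ) < k := by
      have : (1:ℕ) ≤ k := le_trans h1 h2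
      exact_mod_cast Nat.lt_of_lt_of_le Nat.zero_lt_one this
    have key : e k ≤ 2 * (1 - (n (idx k) : ℝ) / (k : ℝ)) := by
      have := aux_Tdiff V σ hσ hVL2 hVvar hVuncorr (n (idx k)) k h1 h2
      calc e k = ∫ ω, ((1/(σ * Real.sqrt k)) * (∑ i ∈ Finset.Icc 1 k, V i ω)
            - (1/(σ * Real.sqrt (n (idx k)))) * (∑ i ∈ Finset.Icc 1 (n (idx k)), V i ω)) ^ 2 ∂ℙ := by
            rw [he]; simp only [hT]
        _ ≤ _ := this
    refine key.trans ?_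
    have h3 : (k:ℝ) < (n (idx k + 1) : ℝ) := by exact_mod_cast hidx_lt k hk
    have h4 : (n (idx k) : ℝ) / (n (idx k + 1) : ℝ) ≤ (n (idx k) : ℝ) / (k : ℝ) := by
      apply div_le_div_of_nonneg_left (by positivity) hkpos h3.le
    linarith
  have hratio' : Tendsto (fun j => (n j : ℝ) / (n (j+1) : ℝ)) atTop (nhds 1) := by
    have h := hnratio.inv₀ one_ne_zero
    simp only [inv_one] at h
    refine h.congr ?_
    intro j
    rw [inv_div]
  have hg : Tendsto (fun j => 2 * (1 - (n j : ℝ) / (n (j+1) : ℝ))) atTop (nhds 0) := by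
    have := (tendsto_const_nhds (x := (1:ℝ)) (f := atTop)).sub hratio'
    have h2 := this.const_mul (2:ℝ)
    simpa using h2
  have he_tendsto : Tendsto e atTop (nhds 0) :=
    squeeze_zero' (Eventually.of_forall he0) hebound (hg.comp hidx_tendsto)
  -- probability measures
  have hPM : ∀ k, IsProbabilityMeasure (Measure.map (T k) ℙ) :=
    fun k => Measure.isProbabilityMeasure_map (hTmeas k).aemeasurable
  have hQM : IsProbabilityMeasure (Measure.map Tlim ℙ) :=
    Measure.isProbabilityMeasure_map hTlimmeas.aemeasurable
  let Pm : ℕ → ProbabilityMeasure ℝ := fun k => ⟨Measure.map (T k) ℙ, hPM k⟩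
  let Qm : ProbabilityMeasure ℝ := ⟨Measure.map Tlim ℙ, hQM⟩
  have hmapint : ∀ (g : Ω → ℝ), Measurable g → ∀ f : BoundedContinuousFunction ℝ ℝ,
      ∫ x, f x ∂(Measure.map g ℙ) = ∫ ω, f (g ω) ∂ℙ :=
    fun g hg f => integral_map hg.aemeasurable f.continuous.aestronglyMeasurable
  have hPsub : Tendsto (fun j => Pm (n j)) atTop (nhds Qm) := by
    rw [ProbabilityMeasure.tendsto_iff_forall_integral_tendsto]
    intro f
    have h1 : ∀ j, ∫ x, f x ∂((Pm (n j)) : Measure ℝ) = ∫ ω, f (T (n j) ω) ∂ℙ :=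
      fun j => hmapint _ (hTmeas _) f
    have h2 : ∫ x, f x ∂(Qm : Measure ℝ) = ∫ ω, f (Tlim ω) ∂ℙ := hmapint Tlim hTlimmeas f
    simp only [h1, h2]
    exact hsub f
  -- move to the Lévy–Prokhorov metric
  let toLP : ProbabilityMeasure ℝ → LevyProkhorov (ProbabilityMeasure ℝ) :=
    LevyProkhorov.toMeasureEquiv.symm
  have hdist1 : ∀ k, dist (toLP (Pm k)) (toLP (Pm (n (idx k)))) ≤ e k ^ ((3:ℝ)⁻¹) := by
    intro k
    haveI := hPM k
    haveI := hPM (n (idx k))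
    rw [LevyProkhorov.dist_probabilityMeasure_def]
    have hδ0 : 0 ≤ e k ^ ((3:ℝ)⁻¹) := Real.rpow_nonneg (he0 k) _
    refine levyProkhorovDist_le_of_forall_le
      (Measure.map (T k) ℙ) (Measure.map (T (n (idx k))) ℙ) hδ0 ?_
    intro ε B hε hB
    have hε0 : 0 < ε := lt_of_le_of_lt hδ0 hε
    have hΔint : Integrable (fun ω => (T k ω - T (n (idx k)) ω) ^ 2) ℙ :=
      ((hTL2 k).sub (hTL2 _)).integrable_sq
    have cheb : (ℙ {ω | ε ≤ |T k ω - T (n (idx k)) ω|}) ≤ ENNReal.ofReal ε := by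
      have hsub2 : {ω | ε ≤ |T k ω - T (n (idx k)) ω|}
          ⊆ {ω | ε^2 ≤ (T k ω - T (n (idx k)) ω)^2} := by
        intro ω hω
        have h3 := pow_le_pow_left₀ hε0.le hω 2
        simpa [sq_abs] using h3
      have h1 := mul_meas_ge_le_integral_of_nonneg
        (Eventually.of_forall (fun ω => sq_nonneg (T k ω - T (n (idx k)) ω))) hΔint (ε^2)
      have h2 : (ℙ {ω | ε ≤ |T k ω - T (n (idx k)) ω|}).toReal ≤ e k / ε^2 := by
        have hmono : (ℙ {ω | ε ≤ |T k ω - T (n (idx k)) ω|}).toReal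
            ≤ (ℙ {ω | ε^2 ≤ (T k ω - T (n (idx k)) ω)^2}).toReal :=
          ENNReal.toReal_mono (measure_ne_top _ _) (measure_mono hsub2)
        refine hmono.trans ?_
        rw [le_div_iff₀ (by positivity)]
        rw [measureReal_def] at h1
        linarith [h1]
      have hcube : e k ≤ ε ^ 3 := by
        have h4 : (e k ^ ((3:ℝ)⁻¹)) ^ (3:ℕ) ≤ ε ^ (3:ℕ) := pow_le_pow_left₀ hδ0 hε.le 3
        calc e k = (e k ^ ((3:ℝ)⁻¹)) ^ (3:ℕ) := by
              rw [← Real.rpow_natCast (e k ^ ((3:ℝ)⁻¹)) 3, ← Real.rpow_mul (he0 k)]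
              norm_num
          _ ≤ ε ^ 3 := h4
      rw [← ENNReal.ofReal_toReal (measure_ne_top ℙ _)]
      apply ENNReal.ofReal_le_ofReal
      refine h2.trans ?_
      rw [div_le_iff₀ (by positivity)]
      nlinarith [hcube]
    have hsubset : T k ⁻¹' B ⊆ (T (n (idx k)) ⁻¹' Metric.thickening ε B)
        ∪ {ω | ε ≤ |T k ω - T (n (idx k)) ω|} := by
      intro ω hω
      by_cases hd : |T k ω - T (n (idx k)) ω| < ε
      · left
        rw [Set.mem_preimage, Metric.mem_thickening_iff]
        refine ⟨T k ω, hω, ?_⟩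
        rw [Real.dist_eq, abs_sub_comm]
        exact hd
      · right; exact le_of_not_gt hd
    calc (Measure.map (T k) ℙ) B = ℙ (T k ⁻¹' B) := Measure.map_apply (hTmeas k) hB
      _ ≤ ℙ ((T (n (idx k)) ⁻¹' Metric.thickening ε B)
            ∪ {ω | ε ≤ |T k ω - T (n (idx k)) ω|}) := measure_mono hsubset
      _ ≤ ℙ (T (n (idx k)) ⁻¹' Metric.thickening ε B)
            + ℙ {ω | ε ≤ |T k ω - T (n (idx k)) ω|} := measure_union_le _ _
      _ ≤ (Measure.map (T (n (idx k))) ℙ) (Metric.thickening ε B) + ENNReal.ofReal ε := by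
          rw [Measure.map_apply (hTmeas _) Metric.isOpen_thickening.measurableSet]
          exact add_le_add le_rfl cheb
  have hδ_tendsto : Tendsto (fun k => e k ^ ((3:ℝ)⁻¹)) atTop (nhds 0) := by
    have h5 := he_tendsto.rpow_const (p := (3:ℝ)⁻¹) (Or.inr (by norm_num))
    simpa [Real.zero_rpow] using h5
  have hd1 : Tendsto (fun k => dist (toLP (Pm k)) (toLP (Pm (n (idx k))))) atTop (nhds 0) :=
    squeeze_zero (fun k => dist_nonneg) hdist1 hδ_tendsto
  have hLPsub : Tendsto (fun j => toLP (Pm (n j))) atTop (nhds (toLP Qm)) :=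
    (LevyProkhorov.continuous_ofMeasure_probabilityMeasure.tendsto Qm).comp hPsub
  have hd2 : Tendsto (fun k => dist (toLP (Pm (n (idx k)))) (toLP Qm)) atTop (nhds 0) :=
    (tendsto_iff_dist_tendsto_zero.mp hLPsub).comp hidx_tendsto
  have hdQ : Tendsto (fun k => dist (toLP (Pm k)) (toLP Qm)) atTop (nhds 0) := by
    refine squeeze_zero (fun k => dist_nonneg)
      (fun k => dist_triangle _ (toLP (Pm (n (idx k)))) _) ?_
    simpa using hd1.add hd2
  have hLPconv : Tendsto (fun k => toLP (Pm k)) atTop (nhds (toLP Qm)) :=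
    tendsto_iff_dist_tendsto_zero.mpr hdQ
  have hconv : Tendsto Pm atTop (nhds Qm) :=
    (LevyProkhorov.continuous_toMeasure_probabilityMeasure.tendsto (toLP Qm)).comp hLPconv
  rw [ProbabilityMeasure.tendsto_iff_forall_integral_tendsto] at hconv
  intro f
  have h6 := hconv f
  have hcoe1 : ∀ i : ℕ, ∫ (ω : ℝ), f ω ∂((Pm i : Measure ℝ)) = ∫ ω, f (T i ω) ∂ℙ :=
    fun i => hmapint _ (hTmeas _) f
  have hcoe2 : ∫ (ω : ℝ), f ω ∂((Qm : Measure ℝ)) = ∫ ω, f (Tlim ω) ∂ℙ :=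
    hmapint _ hTlimmeas f
  simp only [hcoe1, hcoe2] at h6
  exact h6
end

section
/- Let G be a finite simple graph with girth at least K+1 (no cycles of length ≤ K), let (M_i)_{i ∈ V(G)} be i.i.d. uniform on {1,…,ℓ} with ℓ ≥ 2, and for each edge k with endpoints i, j set D_k = 1{M_i = M_j}. Then the family (D_k)_{k ∈ E(G)} is K-tuplewise independent: any K distinct edges yield mutually independent random variables D_{k_1}, …, D_{k_K}. -/
open MeasureTheory ProbabilityTheory

lemma exists_leaf_edge {V : Type*} [Fintype V] [DecidableEq V] (G : SimpleGraph V) (K : ℕ)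
    (hg : ∀ (a : V) (w : G.Walk a a), w.IsCycle → K + 1 ≤ w.length)
    (F : Finset (Sym2 V)) (hFG : ↑F ⊆ G.edgeSet) (hcard : F.card ≤ K) (hne : F.Nonempty) :
    ∃ a b : V, s(a, b) ∈ F ∧ ∀ f ∈ F, b ∈ f → f = s(a, b) := by
  classical
  by_contra hcon
  push_neg at hcon
  set H : SimpleGraph V := SimpleGraph.fromEdgeSet ↑F with hH
  have hHG : H ≤ G := by
    calc H ≤ SimpleGraph.fromEdgeSet G.edgeSet := SimpleGraph.fromEdgeSet_mono hFG
    _ = G := G.fromEdgeSet_edgeSet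
  have hadj : ∀ {a b : V}, s(a,b) ∈ F → H.Adj a b := by
    intro a b hab
    rw [hH, SimpleGraph.fromEdgeSet_adj]
    exact ⟨hab, G.ne_of_adj (hFG hab)⟩
  have htwo : ∀ {a v : V}, H.Adj v a → ∃ c, H.Adj v c ∧ c ≠ a := by
    intro a v hva
    have hmem : s(a, v) ∈ F := by
      have h2 := hva.symm
      rw [hH, SimpleGraph.fromEdgeSet_adj] at h2
      exact h2.1
    obtain ⟨f, hfF, hvf, hfne⟩ := hcon a v hmem
    obtain ⟨c, rfl⟩ : ∃ c, f = s(v, c) := ⟨Sym2.Mem.other hvf, by rw [Sym2.other_spec hvf]⟩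
    refine ⟨c, hadj hfF, ?_⟩
    rintro rfl
    exact hfne Sym2.eq_swap
  set L : Set ℕ := {n | ∃ (v u : V) (p : H.Walk v u), p.IsPath ∧ p.length = n} with hL
  have hbdd : BddAbove L := by
    refine ⟨Fintype.card V, ?_⟩
    rintro n ⟨v, u, p, hp, rfl⟩
    exact hp.length_lt.le
  have h1L : 1 ∈ L := by
    obtain ⟨g, hgF⟩ := hne
    induction g using Sym2.ind with
    | _ a b =>
      have hab : H.Adj a b := hadj hgF
      refine ⟨a, b, SimpleGraph.Walk.cons hab SimpleGraph.Walk.nil, ?_, by simp⟩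
      rw [SimpleGraph.Walk.cons_isPath_iff]
      exact ⟨SimpleGraph.Walk.IsPath.nil, by simp [hab.ne]⟩
  have hLne : L.Nonempty := ⟨1, h1L⟩
  set n := sSup L with hn
  have hnL : n ∈ L := Nat.sSup_mem hLne hbdd
  have hmax : ∀ m ∈ L, m ≤ n := fun m hm => le_csSup hbdd hm
  obtain ⟨v, u, p, hp, hlen⟩ := hnL
  have hlen1 : 1 ≤ p.length := hlen ▸ hmax 1 h1L
  cases p with
  | nil => simp at hlen1
  | @cons _ x _ h r =>
    rw [SimpleGraph.Walk.cons_isPath_iff] at hp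
    obtain ⟨hr, hvr⟩ := hp
    have hp' : (SimpleGraph.Walk.cons h r).IsPath :=
      SimpleGraph.Walk.cons_isPath_iff h r |>.2 ⟨hr, hvr⟩
    have hnbr : ∀ w, H.Adj v w → w ∈ (SimpleGraph.Walk.cons h r).support := by
      intro w hw
      by_contra hws
      have hp2 : (SimpleGraph.Walk.cons hw.symm (SimpleGraph.Walk.cons h r)).IsPath :=
        SimpleGraph.Walk.cons_isPath_iff hw.symm (SimpleGraph.Walk.cons h r) |>.2 ⟨hp', hws⟩
      have hmem : (SimpleGraph.Walk.cons hw.symm (SimpleGraph.Walk.cons h r)).length ∈ L :=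
        ⟨w, u, _, hp2, rfl⟩
      have := hmax _ hmem
      simp only [SimpleGraph.Walk.length_cons] at this hlen
      omega
    obtain ⟨w, hvw, hwx⟩ := htwo h
    have hwsup : w ∈ (SimpleGraph.Walk.cons h r).support := hnbr w hvw
    have hedge : s(v, w) ∉ (SimpleGraph.Walk.cons h r).edges := by
      intro hmem
      rw [SimpleGraph.Walk.edges_cons, List.mem_cons] at hmem
      rcases hmem with hmem | hmem
      · rw [Sym2.eq_iff] at hmem
        rcases hmem with ⟨-, rfl⟩ | ⟨rfl, -⟩
        · exact hwx rfl
        · exact h.ne rfl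
      · exact hvr (SimpleGraph.Walk.fst_mem_support_of_mem_edges r hmem)
    set q := (SimpleGraph.Walk.cons h r).takeUntil w hwsup with hq
    have hqpath : q.IsPath := hp'.takeUntil hwsup
    have hqedge : s(w, v) ∉ q.edges := by
      rw [Sym2.eq_swap]
      exact fun hc => hedge (SimpleGraph.Walk.edges_takeUntil_subset _ hwsup hc)
    set c : H.Walk w w := SimpleGraph.Walk.cons hvw.symm q with hc
    have hcyc : c.IsCycle := (SimpleGraph.Walk.cons_isCycle_iff q hvw.symm).2 ⟨hqpath, hqedge⟩
    have hsub : c.edges.toFinset ⊆ F := by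
      intro f hf
      rw [List.mem_toFinset] at hf
      have hf2 := c.edges_subset_edgeSet hf
      rw [hH, SimpleGraph.edgeSet_fromEdgeSet] at hf2
      exact hf2.1
    have hclen : c.length ≤ K := by
      have h1 : c.edges.toFinset.card = c.length := by
        rw [List.toFinset_card_of_nodup hcyc.isTrail.edges_nodup, SimpleGraph.Walk.length_edges]
      calc c.length = c.edges.toFinset.card := h1.symm
        _ ≤ F.card := Finset.card_le_card hsub
        _ ≤ K := hcard
    have hcycG : (c.mapLe hHG).IsCycle := SimpleGraph.Walk.IsCycle.mapLe hHG hcyc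
    have hKcyc := hg w (c.mapLe hHG) hcycG
    have hlenG : (c.mapLe hHG).length = c.length :=
      SimpleGraph.Walk.length_mapLe ..
    omega

lemma indep_split {Ω : Type*} [MeasureSpace Ω] [IsProbabilityMeasure (ℙ : Measure Ω)]
    {V : Type*} [Fintype V] [DecidableEq V]
    (M : V → Ω → ℕ) (hMmeas : ∀ i, Measurable (M i))
    (hMindep : ProbabilityTheory.iIndepFun M ℙ)
    (b : V) (x : ℕ) (B : Set (↥(Finset.univ.erase b) → ℕ)) (hB : MeasurableSet B) :
    ℙ ({ω | (fun w : ↥(Finset.univ.erase b) => M ↑w ω) ∈ B} ∩ {ω | M b ω = x})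
      = ℙ {ω | (fun w : ↥(Finset.univ.erase b) => M ↑w ω) ∈ B} * ℙ {ω | M b ω = x} := by
  have hdisj : Disjoint (Finset.univ.erase b) ({b} : Finset V) := by simp
  have hind := hMindep.indepFun_finset (Finset.univ.erase b) {b} hdisj hMmeas
  have hbmem : b ∈ ({b} : Finset V) := Finset.mem_singleton_self b
  have ht : MeasurableSet ((fun v : ↥({b} : Finset V) → ℕ => v ⟨b, hbmem⟩) ⁻¹' {x}) :=
    (measurable_pi_apply _) (MeasurableSet.singleton x)
  have key := hind.measure_inter_preimage_eq_mul B
    ((fun v : ↥({b} : Finset V) → ℕ => v ⟨b, hbmem⟩) ⁻¹' {x}) hB ht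
  convert key using 3 <;> rfl

/-- If `G` is a finite simple graph of girth at least `K+1`, `(M i)_{i ∈ V}` are i.i.d.
uniform on `{1,…,ℓ}` with `ℓ ≥ 2`, and for each edge `k` with endpoints `i, j` we set
`D k = 1{M i = M j}`, then the family `(D k)_{k ∈ E(G)}` is `K`-tuplewise independent:
any `K` distinct edges yield mutually independent random variables. -/
theorem edge_indicators_tuplewise_independent
    {Ω : Type*} [MeasureSpace Ω] [IsProbabilityMeasure (ℙ : Measure Ω)]
    {V : Type*} [Fintype V] [DecidableEq V] (G : SimpleGraph V)
    (K : ℕ) (hgirth : (K + 1 : ℕ∞) ≤ G.girth)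
    (ℓ : ℕ) (hℓ : 2 ≤ ℓ)
    (M : V → Ω → ℕ) (hMmeas : ∀ i, Measurable (M i))
    (hMindep : ProbabilityTheory.iIndepFun M ℙ)
    (hMunif : ∀ i, ∀ x ∈ Finset.Icc 1 ℓ, ℙ {ω | M i ω = x} = (ℓ : ENNReal)⁻¹)
    (hMrange : ∀ i ω, M i ω ∈ Finset.Icc 1 ℓ)
    (D : G.edgeSet → Ω → ℕ)
    (hD : ∀ (k : G.edgeSet) (i j : V), (k : Sym2 V) = s(i, j) →
      ∀ ω, D k ω = if M i ω = M j ω then 1 else 0) :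
    ∀ e : Fin K → G.edgeSet, Function.Injective e →
      ProbabilityTheory.iIndepFun (fun t => D (e t)) ℙ := by
  classical
  intro e he
  -- cycle length bound from girth
  have hcyc : ∀ (a : V) (w : G.Walk a a), w.IsCycle → K + 1 ≤ w.length := by
    have hgirth' : (K + 1 : ℕ∞) ≤ G.egirth := by
      rcases eq_or_ne G.egirth ⊤ with h | h
      · simp [h]
      · have h2 : (G.girth : ℕ∞) = G.egirth := by
          rw [SimpleGraph.girth]
          exact ENat.coe_toNat h
        rwa [h2] at hgirth
    intro a w hw
    have h3 := SimpleGraph.le_egirth.1 hgirth' a w hw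
    exact_mod_cast h3
  -- endpoints of edges
  choose ep hep using fun t : Fin K => Quot.exists_rep (e t : Sym2 V)
  set i : Fin K → V := fun t => (ep t).1 with hi
  set j : Fin K → V := fun t => (ep t).2 with hj
  have hij : ∀ t, (e t : Sym2 V) = s(i t, j t) := by
    intro t
    exact (hep t).symm
  set A : Fin K → Set Ω := fun t => {ω | M (i t) ω = M (j t) ω} with hA
  have hAmeas : ∀ t, MeasurableSet (A t) := fun t =>
    measurableSet_eq_fun (hMmeas (i t)) (hMmeas (j t))
  have key : ∀ S : Finset (Fin K), ℙ (⋂ t ∈ S, A t) = (ℓ : ENNReal)⁻¹ ^ S.card := by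
    intro S
    induction S using Finset.strongInduction with
    | _ S ih =>
    rcases S.eq_empty_or_nonempty with rfl | hSne
    · simp
    set F : Finset (Sym2 V) := S.image (fun t => (e t : Sym2 V)) with hF
    have hFG : ↑F ⊆ G.edgeSet := by
      intro f hf
      simp only [hF, Finset.coe_image, Set.mem_image, Finset.mem_coe] at hf
      obtain ⟨t, -, rfl⟩ := hf
      exact (e t).2
    have hFcard : F.card ≤ K := le_trans Finset.card_image_le (by simpa using S.card_le_univ)
    have hFne : F.Nonempty := hSne.image _
    obtain ⟨a, b, hab, hleaf⟩ := exists_leaf_edge G K hcyc F hFG hFcard hFne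
    obtain ⟨t0, ht0S, het0⟩ := Finset.mem_image.1 hab
    have hanb : a ≠ b := G.ne_of_adj (G.mem_edgeSet.1 (hFG hab))
    have hA0 : A t0 = {ω | M a ω = M b ω} := by
      have h2 : s(i t0, j t0) = s(a, b) := (hij t0).symm.trans het0
      rw [Sym2.eq_iff] at h2
      rcases h2 with ⟨h3, h4⟩ | ⟨h3, h4⟩
      · rw [hA]; simp only [h3, h4]
      · rw [hA]; simp only [h3, h4]
        ext ω
        simp only [Set.mem_setOf_eq]
        exact eq_comm
    have hbnot : ∀ t ∈ S.erase t0, i t ≠ b ∧ j t ≠ b := by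
      intro t ht
      obtain ⟨htne, htS⟩ := Finset.mem_erase.1 ht
      have hfF : (e t : Sym2 V) ∈ F := Finset.mem_image_of_mem _ htS
      have hnb : b ∉ (e t : Sym2 V) := by
        intro hb
        have h5 := hleaf _ hfF hb
        have h6 : e t = e t0 := Subtype.ext (h5.trans het0.symm)
        exact htne (he h6)
      rw [hij t, Sym2.mem_iff] at hnb
      push_neg at hnb
      exact ⟨fun hc => hnb.1 hc.symm, fun hc => hnb.2 hc.symm⟩
    set T := S.erase t0 with hT
    have hTS : T ⊂ S := Finset.erase_ssubset ht0S
    set E : Set Ω := ⋂ t ∈ T, A t with hE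
    have hEmeas : MeasurableSet E :=
      MeasurableSet.biInter T.countable_toSet (fun t _ => hAmeas t)
    have hIH : ℙ E = (ℓ : ENNReal)⁻¹ ^ T.card := ih T hTS
    have hSdecomp : (⋂ t ∈ S, A t) = E ∩ A t0 := by
      conv_lhs => rw [← Finset.insert_erase ht0S]
      rw [Finset.set_biInter_insert, Set.inter_comm]
    have hamem : a ∈ Finset.univ.erase b := Finset.mem_erase.2 ⟨hanb, Finset.mem_univ a⟩
    have main : ∀ x ∈ Finset.Icc 1 ℓ,
        ℙ (E ∩ {ω | M a ω = x} ∩ {ω | M b ω = x})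
          = ℙ (E ∩ {ω | M a ω = x}) * (ℓ : ENNReal)⁻¹ := by
      intro x hx
      set B : Set (↥(Finset.univ.erase b) → ℕ) :=
        {v | (∀ t, t ∈ T → ∀ (h1 : i t ∈ Finset.univ.erase b)
              (h2 : j t ∈ Finset.univ.erase b), v ⟨i t, h1⟩ = v ⟨j t, h2⟩)
          ∧ ∀ (ha : a ∈ Finset.univ.erase b), v ⟨a, ha⟩ = x} with hB
      have hBmeas : MeasurableSet B := by
        rw [hB, Set.setOf_and]
        apply MeasurableSet.inter
        · simp_rw [Set.setOf_forall]
          exact MeasurableSet.iInter fun t => MeasurableSet.iInter fun ht =>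
            MeasurableSet.iInter fun h1 => MeasurableSet.iInter fun h2 =>
              measurableSet_eq_fun (measurable_pi_apply _) (measurable_pi_apply _)
        · simp_rw [Set.setOf_forall]
          refine MeasurableSet.iInter fun ha => ?_
          have hme : Measurable (fun v : ↥(Finset.univ.erase b) → ℕ => v ⟨a, ha⟩) :=
            measurable_pi_apply _
          exact hme (measurableSet_singleton x)
      have hpre : {ω | (fun w : ↥(Finset.univ.erase b) => M ↑w ω) ∈ B}
          = E ∩ {ω | M a ω = x} := by
        ext ω
        simp only [hB, Set.mem_setOf_eq, hE, Set.mem_inter_iff, Set.mem_iInter]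
        constructor
        · rintro ⟨h1, h2⟩
          exact ⟨fun t ht => h1 t ht (Finset.mem_erase.2 ⟨(hbnot t ht).1, Finset.mem_univ _⟩)
            (Finset.mem_erase.2 ⟨(hbnot t ht).2, Finset.mem_univ _⟩), h2 hamem⟩
        · rintro ⟨h1, h2⟩
          exact ⟨fun t ht _ _ => h1 t ht, fun _ => h2⟩
      have hkey := indep_split M hMmeas hMindep b x B hBmeas
      rw [hpre] at hkey
      rw [hkey, hMunif b x hx]
    have hmeasax : ∀ x : ℕ, MeasurableSet {ω | M a ω = x} := fun x =>
      (hMmeas a) (measurableSet_singleton x)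
    have hmeasbx : ∀ x : ℕ, MeasurableSet {ω | M b ω = x} := fun x =>
      (hMmeas b) (measurableSet_singleton x)
    have hunion1 : E ∩ A t0
        = ⋃ x ∈ (Finset.Icc 1 ℓ : Finset ℕ), (E ∩ {ω | M a ω = x} ∩ {ω | M b ω = x}) := by
      rw [hA0]
      ext ω
      simp only [Set.mem_inter_iff, Set.mem_iUnion, Set.mem_setOf_eq, exists_prop]
      constructor
      · rintro ⟨hE1, hab1⟩
        exact ⟨M b ω, hMrange b ω, ⟨⟨hE1, hab1⟩, rfl⟩⟩
      · rintro ⟨x, hx, ⟨⟨hE1, ha1⟩, hb1⟩⟩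
        exact ⟨hE1, ha1.trans hb1.symm⟩
    have hdisj1 : ((Finset.Icc 1 ℓ : Finset ℕ) : Set ℕ).PairwiseDisjoint
        (fun x => E ∩ {ω | M a ω = x} ∩ {ω | M b ω = x}) := by
      intro x hx y hy hxy
      rw [Function.onFun, Set.disjoint_left]
      rintro ω ⟨-, hbx⟩ ⟨-, hby⟩
      exact hxy (hbx.symm.trans hby)
    have hsum1 : ℙ (E ∩ A t0)
        = ∑ x ∈ Finset.Icc 1 ℓ, ℙ (E ∩ {ω | M a ω = x} ∩ {ω | M b ω = x}) := by
      rw [hunion1]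
      exact measure_biUnion_finset hdisj1
        (fun x _ => ((hEmeas.inter (hmeasax x)).inter (hmeasbx x)))
    have hunion2 : E = ⋃ x ∈ (Finset.Icc 1 ℓ : Finset ℕ), (E ∩ {ω | M a ω = x}) := by
      ext ω
      simp only [Set.mem_iUnion, Set.mem_inter_iff, Set.mem_setOf_eq, exists_prop]
      constructor
      · intro hω
        exact ⟨M a ω, hMrange a ω, hω, rfl⟩
      · rintro ⟨x, -, hω, -⟩
        exact hω
    have hdisj2 : ((Finset.Icc 1 ℓ : Finset ℕ) : Set ℕ).PairwiseDisjoint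
        (fun x => E ∩ {ω | M a ω = x}) := by
      intro x hx y hy hxy
      rw [Function.onFun, Set.disjoint_left]
      rintro ω ⟨-, hax⟩ ⟨-, hay⟩
      exact hxy (hax.symm.trans hay)
    have hsum2 : ℙ E = ∑ x ∈ Finset.Icc 1 ℓ, ℙ (E ∩ {ω | M a ω = x}) := by
      conv_lhs => rw [hunion2]
      exact measure_biUnion_finset hdisj2 (fun x _ => hEmeas.inter (hmeasax x))
    have hcardS : T.card + 1 = S.card := Finset.card_erase_add_one ht0S
    calc ℙ (⋂ t ∈ S, A t) = ℙ (E ∩ A t0) := by rw [hSdecomp]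
      _ = ∑ x ∈ Finset.Icc 1 ℓ, ℙ (E ∩ {ω | M a ω = x} ∩ {ω | M b ω = x}) := hsum1
      _ = ∑ x ∈ Finset.Icc 1 ℓ, ℙ (E ∩ {ω | M a ω = x}) * (ℓ : ENNReal)⁻¹ :=
          Finset.sum_congr rfl main
      _ = (∑ x ∈ Finset.Icc 1 ℓ, ℙ (E ∩ {ω | M a ω = x})) * (ℓ : ENNReal)⁻¹ := by
          rw [Finset.sum_mul]
      _ = ℙ E * (ℓ : ENNReal)⁻¹ := by rw [← hsum2]
      _ = (ℓ : ENNReal)⁻¹ ^ T.card * (ℓ : ENNReal)⁻¹ := by rw [hIH]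
      _ = (ℓ : ENNReal)⁻¹ ^ S.card := by rw [← pow_succ, hcardS]
  have hprob : ∀ t, ℙ (A t) = (ℓ : ENNReal)⁻¹ := by
    intro t
    have := key {t}
    simpa using this
  have hAind : ProbabilityTheory.iIndepSet A ℙ := by
    rw [ProbabilityTheory.iIndepSet_iff_meas_biInter hAmeas]
    intro S
    rw [key S]
    rw [Finset.prod_congr rfl (fun t _ => hprob t), Finset.prod_const]
  have hDind : (fun t => D (e t)) = fun t => (A t).indicator (fun _ => (1 : ℕ)) := by
    funext t ω
    rw [hD (e t) (i t) (j t) (hij t) ω]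
    by_cases hω : ω ∈ A t
    · have hω' : M (i t) ω = M (j t) ω := hω
      rw [Set.indicator_of_mem hω, if_pos hω']
    · have hω' : ¬ M (i t) ω = M (j t) ω := hω
      rw [Set.indicator_of_notMem hω, if_neg hω']
  rw [hDind]
  exact hAind.iIndepFun_indicator
end
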